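/- Let d ≥ 1, ρ > 0, and let f : ℝ^d → ℝ be L-Lipschitz. Then for every θ ∈ ℝ^d, ∫_{ℝ^d} exp(f(θ) − f(z) − ‖θ − z‖₂²/(2ρ²)) dz ≥ B(ρ), where B(ρ) := (2 π^{d/2} ρ^d Γ(d) exp(L² ρ²/4) / Γ(d/2)) · D_{−d}(Lρ). -/

import Mathlib

open MeasureTheory

noncomputable section

/-- ℝ^d with the Euclidean (ℓ²) structure. -/
abbrev En (d : ℕ) := EuclideanSpace ℝ (Fin d)

/-- The parabolic cylinder function
`D_{−d}(z) = (exp(−z²/4)/Γ(d)) ∫₀^∞ exp(−xz − x²/2) x^{d−1} dx`. -/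
noncomputable def pcf (d : ℕ) (z : ℝ) : ℝ :=
  (Real.exp (-z ^ 2 / 4) / Real.Gamma d) *
    ∫ x in Set.Ioi (0 : ℝ), Real.exp (-(x * z) - x ^ 2 / 2) * x ^ (d - 1)

/-- The normalized density `π(θ) = exp(−f(θ))/C_π`. -/
noncomputable def nrmDensity {d : ℕ} (f : En d → ℝ) (θ : En d) : ℝ :=
  Real.exp (-f θ) / ∫ θ' : En d, Real.exp (-f θ')

/-- The normalized Gaussian-smoothed density
`π_ρ(θ) = (1/C_{π_ρ}) ∫ exp(−f(z) − ‖z−θ‖²/(2ρ²)) dz`. -/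
noncomputable def gaussSmoothed {d : ℕ} (f : En d → ℝ) (ρ : ℝ) (θ : En d) : ℝ :=
  (∫ z : En d, Real.exp (-f z - ‖z - θ‖ ^ 2 / (2 * ρ ^ 2))) /
    ∫ θ' : En d, ∫ z : En d, Real.exp (-f z - ‖z - θ'‖ ^ 2 / (2 * ρ ^ 2))

/-! Since `f` is `L`-Lipschitz, the integrand is at least `exp (-L‖θ - z‖ - ‖θ - z‖² / (2ρ²))`,
a radial function whose integral can be computed exactly: polar coordinates turn it into the
sphere area `2 π^(d/2) / Γ(d/2)` times a one-dimensional integral over `(0, ∞)`, which after the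
substitution `r = ρ x` is the integral defining `D_{-d}(Lρ)`. -/

open Real Set Module

theorem lipschitzWith_toNNReal_of_abs_sub_le {E : Type*} [SeminormedAddCommGroup E] {f : E → ℝ}
    {L : ℝ} (hLip : ∀ θ η, |f θ - f η| ≤ L * ‖θ - η‖) :
    LipschitzWith L.toNNReal f :=
  LipschitzWith.of_dist_le_mul fun θ η => by
    rw [dist_eq_norm, dist_eq_norm]
    exact (hLip θ η).trans <| mul_le_mul_of_nonneg_right (le_coe_toNNReal L) (norm_nonneg _)

theorem integral_Ioi_pow_mul_exp_neg_mul_sub_sq_div (k : ℕ) (a : ℝ) {ρ : ℝ} (hρ : 0 < ρ) :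
    ∫ y in Ioi (0 : ℝ), y ^ k * exp (-(a * y) - y ^ 2 / (2 * ρ ^ 2)) =
      ρ ^ (k + 1) * ∫ x in Ioi (0 : ℝ), exp (-(x * (a * ρ)) - x ^ 2 / 2) * x ^ k := by
  have hscale := integral_comp_mul_left_Ioi'
    (fun y : ℝ => y ^ k * exp (-(a * y) - y ^ 2 / (2 * ρ ^ 2))) 0 hρ
  rw [mul_zero] at hscale
  rw [← hscale, smul_eq_mul, ← integral_const_mul, ← integral_const_mul]
  congr 1 with x
  have : -(a * (ρ * x)) - (ρ * x) ^ 2 / (2 * ρ ^ 2) = -(x * (a * ρ)) - x ^ 2 / 2 := by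
    field_simp
  rw [this]
  ring

theorem integral_Ioi_exp_mul_pow_eq_Gamma_mul_pcf {n : ℕ} (hn : n ≠ 0) (z : ℝ) :
    ∫ x in Ioi (0 : ℝ), exp (-(x * z) - x ^ 2 / 2) * x ^ (n - 1) =
      Gamma n * exp (z ^ 2 / 4) * pcf n z := by
  have hΓ : Gamma n ≠ 0 := (Gamma_pos_of_pos (by positivity)).ne'
  rw [pcf, neg_div, exp_neg]
  field_simp

section

variable {V : Type*} [NormedAddCommGroup V] [InnerProductSpace ℝ V] [FiniteDimensional ℝ V]
  [MeasurableSpace V] [BorelSpace V]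

theorem integrable_exp_neg_mul_sq_norm {b : ℝ} (hb : 0 < b) :
    Integrable fun v : V => exp (-b * ‖v‖ ^ 2) :=
  Integrable.of_integral_ne_zero <| by
    rw [GaussianFourier.integral_rexp_neg_mul_sq_norm hb]; positivity

theorem integrable_exp_mul_norm_sub_sq_norm_div (a : ℝ) {ρ : ℝ} (hρ : ρ ≠ 0) :
    Integrable fun v : V => exp (a * ‖v‖ - ‖v‖ ^ 2 / (2 * ρ ^ 2)) := by
  refine ((integrable_exp_neg_mul_sq_norm (V := V) (b := 1 / (4 * ρ ^ 2))
    (by positivity)).const_mul (exp (a ^ 2 * ρ ^ 2))).mono' (by fun_prop) ?_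
  filter_upwards with v
  rw [norm_of_nonneg (exp_pos _).le, ← exp_add, exp_le_exp]
  have hsquare : a * ‖v‖ - ‖v‖ ^ 2 / (2 * ρ ^ 2) = a ^ 2 * ρ ^ 2 + -(1 / (4 * ρ ^ 2)) * ‖v‖ ^ 2 -
      (2 * a * ρ ^ 2 - ‖v‖) ^ 2 / (4 * ρ ^ 2) := by
    field_simp; ring
  rw [hsquare]
  linarith [show 0 ≤ (2 * a * ρ ^ 2 - ‖v‖) ^ 2 / (4 * ρ ^ 2) by positivity]

theorem integral_fun_norm_eq_mul_integral_Ioi [Nontrivial V] (g : ℝ → ℝ) :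
    ∫ v : V, g ‖v‖ = 2 * π ^ ((finrank ℝ V : ℝ) / 2) / Gamma ((finrank ℝ V : ℝ) / 2) *
      ∫ y in Ioi (0 : ℝ), y ^ (finrank ℝ V - 1) * g y := by
  have hn : (0 : ℝ) < finrank ℝ V := by exact_mod_cast finrank_pos
  have hball : volume.real (Metric.ball (0 : V) 1) =
      π ^ ((finrank ℝ V : ℝ) / 2) / Gamma ((finrank ℝ V : ℝ) / 2 + 1) := by
    rw [measureReal_def, InnerProductSpace.volume_ball, ENNReal.ofReal_one, one_pow, one_mul,
      ENNReal.toReal_ofReal (by positivity), sqrt_eq_rpow, ← rpow_natCast, ← rpow_mul pi_pos.le]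
    ring_nf
  rw [integral_fun_norm_addHaar, hball, Gamma_add_one (by positivity)]
  simp only [nsmul_eq_mul, smul_eq_mul]
  field_simp

theorem integral_exp_neg_mul_norm_sub_sq_norm_div [Nontrivial V] (a : ℝ) {ρ : ℝ} (hρ : 0 < ρ) :
    ∫ v : V, exp (-(a * ‖v‖) - ‖v‖ ^ 2 / (2 * ρ ^ 2)) =
      2 * π ^ ((finrank ℝ V : ℝ) / 2) * ρ ^ finrank ℝ V * Gamma (finrank ℝ V) *
        exp (a ^ 2 * ρ ^ 2 / 4) / Gamma ((finrank ℝ V : ℝ) / 2) * pcf (finrank ℝ V) (a * ρ) := by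
  rw [integral_fun_norm_eq_mul_integral_Ioi fun r => exp (-(a * r) - r ^ 2 / (2 * ρ ^ 2)),
    integral_Ioi_pow_mul_exp_neg_mul_sub_sq_div _ a hρ, Nat.sub_add_cancel finrank_pos,
    integral_Ioi_exp_mul_pow_eq_Gamma_mul_pcf finrank_pos.ne', mul_pow]
  ring

theorem integrable_exp_sub_sub_sq_norm_div {f : V → ℝ} {L : ℝ}
    (hLip : ∀ θ η, |f θ - f η| ≤ L * ‖θ - η‖) {ρ : ℝ} (hρ : ρ ≠ 0) (θ : V) :
    Integrable fun z => exp (f θ - f z - ‖θ - z‖ ^ 2 / (2 * ρ ^ 2)) := by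
  have hf := (lipschitzWith_toNNReal_of_abs_sub_le hLip).continuous
  refine ((integrable_exp_mul_norm_sub_sq_norm_div L hρ).comp_sub_left θ).mono' (by fun_prop) ?_
  filter_upwards with z
  rw [norm_of_nonneg (exp_pos _).le, exp_le_exp]
  linarith [(abs_le.mp (hLip θ z)).2]

end

/-- Lower bound on the smoothing integral: for an `L`-Lipschitz `f`,
`∫ exp(f(θ) − f(z) − ‖θ−z‖²/(2ρ²)) dz ≥ B(ρ)` where
`B(ρ) = (2 π^{d/2} ρ^d Γ(d) exp(L²ρ²/4)/Γ(d/2)) D_{−d}(Lρ)`. -/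
theorem statement14 {d : ℕ} (hd : 1 ≤ d) (ρ : ℝ) (hρ : 0 < ρ) (f : En d → ℝ) (L : ℝ)
    (hLip : ∀ θ η : En d, |f θ - f η| ≤ L * ‖θ - η‖) (θ : En d) :
    2 * Real.pi ^ ((d : ℝ) / 2) * ρ ^ d * Real.Gamma d * Real.exp (L ^ 2 * ρ ^ 2 / 4) /
        Real.Gamma ((d : ℝ) / 2) * pcf d (L * ρ) ≤
      ∫ z : En d, Real.exp (f θ - f z - ‖θ - z‖ ^ 2 / (2 * ρ ^ 2)) := by
  have : Nontrivial (En d) := by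
    have : Nonempty (Fin d) := ⟨⟨0, hd⟩⟩
    infer_instance
  have hradial : Integrable fun z : En d => exp (-(L * ‖θ - z‖) - ‖θ - z‖ ^ 2 / (2 * ρ ^ 2)) := by
    simpa only [neg_mul] using
      (integrable_exp_mul_norm_sub_sq_norm_div (V := En d) (-L) hρ.ne').comp_sub_left θ
  calc _ = ∫ w : En d, exp (-(L * ‖w‖) - ‖w‖ ^ 2 / (2 * ρ ^ 2)) := by
        simpa only [finrank_euclideanSpace_fin] using
          (integral_exp_neg_mul_norm_sub_sq_norm_div (V := En d) L hρ).symm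
    _ = ∫ z : En d, exp (-(L * ‖θ - z‖) - ‖θ - z‖ ^ 2 / (2 * ρ ^ 2)) :=
        (integral_sub_left_eq_self _ _ θ).symm
    _ ≤ _ := integral_mono hradial (integrable_exp_sub_sub_sq_norm_div hLip hρ.ne' θ) fun z => by
        rw [exp_le_exp]
        linarith [(abs_le.mp (hLip θ z)).1]
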